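/- arXiv:2309.13692 — 5 statements merged into one kernel-verified Lean document; each statement's English description precedes it below -/
import Mathlib

section
/- For every graph G = (V, E) with all vertex degrees finite, the Hall density Hall(G) = inf over finite nonempty U ⊆ V of |E[U]|/|U| (where E[U] is the set of edges with at least one endpoint in U) equals the supremum of all α such that G admits a fractional orientation in which every vertex has in-degree at least α. -/
open scoped NNReal

lemma EU_finite {V E : Type*} (inc : E → V → Prop)
    (hdeg : ∀ v : V, {e : E | inc e v}.Finite) (U : Finset V) :
    {e : E | ∃ v ∈ U, inc e v}.Finite := by
  have h : {e : E | ∃ v ∈ U, inc e v} = ⋃ v ∈ (U : Set V), {e | inc e v} := by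
    ext e; simp
  rw [h]
  exact Set.Finite.biUnion U.finite_toSet (fun v _ => hdeg v)

lemma lemA {V E : Type*} (inc : E → V → Prop)
    (hdeg : ∀ v : V, {e : E | inc e v}.Finite)
    (α : ℝ) (f : E → V → ℝ≥0)
    (hf0 : ∀ e v, ¬ inc e v → f e v = 0)
    (hf1 : ∀ e, ∑' v, f e v = 1)
    (hfα : ∀ v, α ≤ ∑ e ∈ (hdeg v).toFinset, (f e v : ℝ))
    (U : Finset V) (hU : U.Nonempty) :
    α ≤ ({e : E | ∃ v ∈ U, inc e v}.ncard : ℝ) / U.card := by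
  classical
  set F : Finset E := (EU_finite inc hdeg U).toFinset with hF
  have hmemF : ∀ e, e ∈ F ↔ ∃ v ∈ U, inc e v := by
    intro e; simp [hF, Set.Finite.mem_toFinset]
  have hncard : ({e : E | ∃ v ∈ U, inc e v}.ncard : ℝ) = F.card := by
    rw [Set.ncard_eq_toFinset_card _ (EU_finite inc hdeg U)]
  have hsum_eq : ∀ v ∈ U, ∑ e ∈ (hdeg v).toFinset, (f e v : ℝ) = ∑ e ∈ F, (f e v : ℝ) := by
    intro v hv
    apply Finset.sum_subset
    · intro e he
      rw [hmemF]
      exact ⟨v, hv, (hdeg v).mem_toFinset.mp he⟩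
    · intro e _ he
      have : ¬ inc e v := fun h => he ((hdeg v).mem_toFinset.mpr h)
      simp [hf0 e v this]
  have hsummable : ∀ e, Summable (fun v => f e v) := by
    intro e
    by_contra h
    have := tsum_eq_zero_of_not_summable h
    rw [hf1 e] at this
    exact one_ne_zero this
  have hinner : ∀ e, ∑ v ∈ U, (f e v : ℝ) ≤ 1 := by
    intro e
    have h1 : ∑ v ∈ U, f e v ≤ ∑' v, f e v :=
      Summable.sum_le_tsum U (fun _ _ => by positivity) (hsummable e)
    rw [hf1 e] at h1
    calc ∑ v ∈ U, (f e v : ℝ) = ((∑ v ∈ U, f e v : ℝ≥0) : ℝ) := by push_cast; ring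
    _ ≤ ((1 : ℝ≥0) : ℝ) := by exact_mod_cast h1
    _ = 1 := by norm_num
  have hmain : α * U.card ≤ F.card := by
    calc α * U.card = ∑ _v ∈ U, α := by rw [Finset.sum_const]; ring
    _ ≤ ∑ v ∈ U, ∑ e ∈ (hdeg v).toFinset, (f e v : ℝ) := Finset.sum_le_sum (fun v _ => hfα v)
    _ = ∑ v ∈ U, ∑ e ∈ F, (f e v : ℝ) := Finset.sum_congr rfl hsum_eq
    _ = ∑ e ∈ F, ∑ v ∈ U, (f e v : ℝ) := Finset.sum_comm
    _ ≤ ∑ _e ∈ F, (1 : ℝ) := Finset.sum_le_sum (fun e _ => hinner e)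
    _ = F.card := by rw [Finset.sum_const]; ring
  have hUpos : (0 : ℝ) < U.card := by exact_mod_cast Finset.card_pos.mpr hU
  rw [hncard, le_div_iff₀ hUpos]
  exact hmain

lemma EU_finite' {V E : Type*} (inc : E → V → Prop)
    (hdeg : ∀ v : V, {e : E | inc e v}.Finite) (U : Finset V) :
    {e : E | ∃ v ∈ U, inc e v}.Finite := by
  have h : {e : E | ∃ v ∈ U, inc e v} = ⋃ v ∈ (U : Set V), {e | inc e v} := by
    ext e; simp
  rw [h]
  exact Set.Finite.biUnion U.finite_toSet (fun v _ => hdeg v)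

lemma lemB {V E : Type*} (inc : E → V → Prop)
    (hdeg : ∀ v : V, {e : E | inc e v}.Finite)
    (hE : ∀ e : E, ∃ v, inc e v) (p q : ℕ) (hq : 0 < q)
    (hcond : ∀ U : Finset V, U.Nonempty →
      (p : ℝ) * U.card ≤ (q : ℝ) * ({e : E | ∃ v ∈ U, inc e v}.ncard : ℝ)) :
    ∃ f : E → V → ℝ≥0,
      (∀ e v, ¬ inc e v → f e v = 0) ∧
      (∀ e, ∑' v, f e v = 1) ∧
      (∀ v, (p : ℝ) / q ≤ ∑ e ∈ (hdeg v).toFinset, (f e v : ℝ)) := by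
  classical
  -- Hall system: demands (v,i), supplies (e,j)
  set t : V × Fin p → Finset (E × Fin q) :=
    fun x => (hdeg x.1).toFinset ×ˢ Finset.univ with ht
  have hhall : ∀ s : Finset (V × Fin p), s.card ≤ (s.biUnion t).card := by
    intro s
    rcases s.eq_empty_or_nonempty with rfl | hs
    · simp
    · set U : Finset V := s.image Prod.fst with hU
      have hUne : U.Nonempty := hs.image _
      set B : Finset E := U.biUnion (fun v => (hdeg v).toFinset) with hB
      have hBcard : ({e : E | ∃ v ∈ U, inc e v}.ncard : ℝ) = B.card := by
        have : {e : E | ∃ v ∈ U, inc e v} = ↑B := by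
          ext e; simp [hB, Set.Finite.mem_toFinset]
        rw [this, Set.ncard_coe_finset]
      have hkey : U.card * p ≤ B.card * q := by
        have := hcond U hUne
        rw [hBcard] at this
        have h2 : (U.card * p : ℝ) ≤ (B.card * q : ℝ) := by linarith
        exact_mod_cast h2
      have h1 : s.card ≤ U.card * p := by
        have hsub : s ⊆ U ×ˢ (Finset.univ : Finset (Fin p)) := by
          intro x hx
          rw [Finset.mem_product]
          exact ⟨Finset.mem_image_of_mem _ hx, Finset.mem_univ _⟩
        calc s.card ≤ (U ×ˢ (Finset.univ : Finset (Fin p))).card := Finset.card_le_card hsub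
        _ = U.card * p := by rw [Finset.card_product, Finset.card_univ, Fintype.card_fin]
      have h2 : B.card * q ≤ (s.biUnion t).card := by
        have hsub : B ×ˢ (Finset.univ : Finset (Fin q)) ⊆ s.biUnion t := by
          intro y hy
          rw [Finset.mem_product] at hy
          obtain ⟨v, hvU, hev⟩ := Finset.mem_biUnion.mp hy.1
          obtain ⟨⟨v', i⟩, hxs, hfst⟩ := Finset.mem_image.mp hvU
          rw [Finset.mem_biUnion]
          refine ⟨(v', i), hxs, ?_⟩
          rw [ht, Finset.mem_product]
          have hv' : v' = v := hfst
          subst hv'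
          exact ⟨hev, Finset.mem_univ _⟩
        calc B.card * q = (B ×ˢ (Finset.univ : Finset (Fin q))).card := by
              rw [Finset.card_product, Finset.card_univ, Fintype.card_fin]
        _ ≤ (s.biUnion t).card := Finset.card_le_card hsub
      omega
  obtain ⟨g, hg1, hg2⟩ := (Finset.all_card_le_biUnion_card_iff_exists_injective t).mp hhall
  have hginc : ∀ x : V × Fin p, inc (g x).1 x.1 := by
    intro x
    have := hg2 x
    rw [ht, Finset.mem_product] at this
    exact (hdeg x.1).mem_toFinset.mp this.1
  -- the finite fiber of g over edge e
  have hfin : ∀ e : E, {x : V × Fin p | (g x).1 = e}.Finite := by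
    intro e
    have heq : {x : V × Fin p | (g x).1 = e}
        = g ⁻¹' (({e} : Set E) ×ˢ (Set.univ : Set (Fin q))) := by
      ext x
      constructor
      · intro hx
        exact Set.mem_preimage.mpr (Set.mem_prod.mpr ⟨hx, Set.mem_univ _⟩)
      · intro hx
        exact (Set.mem_prod.mp (Set.mem_preimage.mp hx)).1
    rw [heq]
    exact (((Set.finite_singleton e).prod Set.finite_univ)).preimage hg1.injOn
  set A : E → Finset (V × Fin p) := fun e => (hfin e).toFinset with hA
  have hmemA : ∀ e x, x ∈ A e ↔ (g x).1 = e := by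
    intro e x
    rw [hA]
    simp only [Set.Finite.mem_toFinset, Set.mem_setOf_eq]
  set m : E → V → ℕ := fun e v => ((A e).filter (fun x => x.1 = v)).card with hm
  -- per-vertex count
  have hvert : ∀ v : V, ∑ e ∈ (hdeg v).toFinset, m e v = p := by
    intro v
    have hcover : ∀ x ∈ ({v} : Finset V) ×ˢ (Finset.univ : Finset (Fin p)),
        (g x).1 ∈ (hdeg v).toFinset := by
      intro x hx
      rw [Finset.mem_product, Finset.mem_singleton] at hx
      rw [(hdeg v).mem_toFinset, ← hx.1]
      exact hginc x
    have := Finset.card_eq_sum_card_fiberwise hcover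
    rw [Finset.card_product, Finset.card_singleton, Finset.card_univ, Fintype.card_fin,
      one_mul] at this
    have heq2 : ∀ e ∈ (hdeg v).toFinset, m e v
        = ((({v} : Finset V) ×ˢ (Finset.univ : Finset (Fin p))).filter
            (fun x => (g x).1 = e)).card := by
      intro e _
      have hfeq : (A e).filter (fun x => x.1 = v)
          = (({v} : Finset V) ×ˢ (Finset.univ : Finset (Fin p))).filter
              (fun x => (g x).1 = e) := by
        ext x
        simp only [Finset.mem_filter, Finset.mem_product, Finset.mem_singleton, Finset.mem_univ,
          and_true, hmemA]
        tauto
      simp only [hm]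
      exact congrArg Finset.card hfeq
    rw [Finset.sum_congr rfl heq2]
    exact this.symm
  -- per-edge count
  have hedge : ∀ e : E, ∀ s : Finset V, (∀ x ∈ A e, x.1 ∈ s) →
      ∑ v ∈ s, m e v = (A e).card := by
    intro e s hcov
    exact (Finset.card_eq_sum_card_fiberwise hcov).symm
  have hAq : ∀ e, (A e).card ≤ q := by
    intro e
    have : ∀ x ∈ A e, (fun x => (g x).2) x ∈ (Finset.univ : Finset (Fin q)) :=
      fun x _ => Finset.mem_univ _
    have hinj : Set.InjOn (fun x => (g x).2) (A e) := by
      intro x hx y hy hxy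
      apply hg1
      apply Prod.ext
      · rw [(hmemA e x).mp hx, (hmemA e y).mp hy]
      · exact hxy
    calc (A e).card ≤ (Finset.univ : Finset (Fin q)).card :=
          Finset.card_le_card_of_injOn _ this hinj
    _ = q := by rw [Finset.card_univ, Fintype.card_fin]
  have hmsupp : ∀ e v, m e v ≠ 0 → inc e v := by
    intro e v h
    rw [hm] at h
    obtain ⟨x, hx⟩ := Finset.card_pos.mp (Nat.pos_of_ne_zero h)
    rw [Finset.mem_filter] at hx
    have := hginc x
    rw [(hmemA e x).mp hx.1, hx.2] at this
    exact this
  -- choose default endpoint per edge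
  set v0 : E → V := fun e => (hE e).choose with hv0
  have hv0inc : ∀ e, inc e (v0 e) := fun e => (hE e).choose_spec
  have hqpos : (0 : ℝ≥0) < q := by exact_mod_cast hq
  -- the fractional orientation
  set f : E → V → ℝ≥0 := fun e v =>
    (m e v : ℝ≥0) / (q : ℝ≥0) +
      (if v = v0 e then 1 - ((A e).card : ℝ≥0) / (q : ℝ≥0) else 0) with hf
  refine ⟨f, ?_, ?_, ?_⟩
  · intro e v hnotinc
    have h1 : m e v = 0 := by
      by_contra h; exact hnotinc (hmsupp e v h)
    have h2 : v ≠ v0 e := fun h => hnotinc (h ▸ hv0inc e)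
    simp [hf, h1, h2]
  · intro e
    set S : Finset V := insert (v0 e) ((A e).image Prod.fst) with hS
    have hsupp : ∀ v ∉ S, f e v = 0 := by
      intro v hv
      rw [hS, Finset.mem_insert] at hv
      push_neg at hv
      have h1 : m e v = 0 := by
        rw [hm]
        rw [Finset.card_eq_zero, Finset.filter_eq_empty_iff]
        intro x hx h
        exact hv.2 (Finset.mem_image.mpr ⟨x, hx, h⟩)
      simp [hf, h1, hv.1]
    rw [tsum_eq_sum hsupp]
    have hcov : ∀ x ∈ A e, x.1 ∈ S := by
      intro x hx
      rw [hS]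
      exact Finset.mem_insert_of_mem (Finset.mem_image_of_mem _ hx)
    have hsum_m : ∑ v ∈ S, (m e v : ℝ≥0) = ((A e).card : ℝ≥0) := by
      have h := hedge e S hcov
      calc ∑ v ∈ S, (m e v : ℝ≥0) = ((∑ v ∈ S, m e v : ℕ) : ℝ≥0) := by push_cast; ring
      _ = ((A e).card : ℝ≥0) := by rw [h]
    have hv0S : v0 e ∈ S := Finset.mem_insert_self _ _
    have hdivle : ((A e).card : ℝ≥0) / q ≤ 1 := by
      rw [div_le_one hqpos]
      exact_mod_cast hAq e
    calc ∑ v ∈ S, f e v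
        = (∑ v ∈ S, (m e v : ℝ≥0) / q) +
          ∑ v ∈ S, (if v = v0 e then 1 - ((A e).card : ℝ≥0) / q else 0) := by
          simp only [hf]
          rw [← Finset.sum_add_distrib]
    _ = ((A e).card : ℝ≥0) / q + (1 - ((A e).card : ℝ≥0) / q) := by
          rw [← Finset.sum_div, hsum_m, Finset.sum_ite_eq' S (v0 e), if_pos hv0S]
    _ = 1 := add_tsub_cancel_of_le hdivle
  · intro v
    have hle : ∀ e ∈ (hdeg v).toFinset, (m e v : ℝ) / q ≤ (f e v : ℝ) := by
      intro e _
      have : (m e v : ℝ≥0) / q ≤ f e v := le_self_add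
      calc (m e v : ℝ) / q = (((m e v : ℝ≥0) / q : ℝ≥0) : ℝ) := by push_cast; ring
      _ ≤ (f e v : ℝ) := by exact_mod_cast this
    calc (p : ℝ) / q = (∑ e ∈ (hdeg v).toFinset, (m e v : ℝ)) / q := by
          rw [← Nat.cast_sum, hvert v]
    _ = ∑ e ∈ (hdeg v).toFinset, (m e v : ℝ) / q := Finset.sum_div _ _ _
    _ ≤ ∑ e ∈ (hdeg v).toFinset, (f e v : ℝ) := Finset.sum_le_sum hle

/-- For every hypergraph `G = (V, E)` (given by an incidence relation) with
all vertex degrees finite and every edge incident to at least one vertex, the Hall density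
`inf` over finite nonempty `U ⊆ V` of `|E[U]|/|U|` equals the supremum of all `α` such that `G`
admits a fractional orientation in which every vertex has (expected) in-degree at least `α`. -/
theorem stmt_0 {V E : Type*} (inc : E → V → Prop)
    (hdeg : ∀ v : V, {e : E | inc e v}.Finite)
    (hE : ∀ e : E, ∃ v, inc e v) :
    sInf {r : ℝ | ∃ U : Finset V, U.Nonempty ∧
        r = ({e : E | ∃ v ∈ U, inc e v}.ncard : ℝ) / U.card} =
    sSup {α : ℝ | ∃ f : E → V → ℝ≥0,
        (∀ e v, ¬ inc e v → f e v = 0) ∧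
        (∀ e, ∑' v, f e v = 1) ∧
        (∀ v, α ≤ ∑ e ∈ (hdeg v).toFinset, (f e v : ℝ))} := by
  classical
  set S := {r : ℝ | ∃ U : Finset V, U.Nonempty ∧
      r = ({e : E | ∃ v ∈ U, inc e v}.ncard : ℝ) / U.card} with hSdef
  set T := {α : ℝ | ∃ f : E → V → ℝ≥0,
      (∀ e v, ¬ inc e v → f e v = 0) ∧
      (∀ e, ∑' v, f e v = 1) ∧
      (∀ v, α ≤ ∑ e ∈ (hdeg v).toFinset, (f e v : ℝ))} with hTdef
  have hAB : ∀ α ∈ T, ∀ r ∈ S, α ≤ r := by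
    rintro α ⟨f, hf0, hf1, hfα⟩ r ⟨U, hU, rfl⟩
    exact lemA inc hdeg α f hf0 hf1 hfα U hU
  by_cases hV : Nonempty V
  · obtain ⟨v00⟩ := hV
    set r0 : ℝ := ({e : E | ∃ v ∈ ({v00} : Finset V), inc e v}.ncard : ℝ) /
      (({v00} : Finset V).card) with hr0
    have hr0S : r0 ∈ S := ⟨{v00}, Finset.singleton_nonempty _, rfl⟩
    have hSne : S.Nonempty := ⟨r0, hr0S⟩
    have hT0 : (0 : ℝ) ∈ T := by
      obtain ⟨f, h0, h1, h2⟩ := lemB inc hdeg hE 0 1 (by norm_num)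
        (fun U hU => by norm_num)
      refine ⟨f, h0, h1, fun v => ?_⟩
      have := h2 v
      norm_num at this
      exact this
    have hTne : T.Nonempty := ⟨0, hT0⟩
    have hTbdd : BddAbove T := ⟨r0, fun α hα => hAB α hα r0 hr0S⟩
    have h1 : sSup T ≤ sInf S :=
      le_csInf hSne (fun r hr => csSup_le hTne (fun α hα => hAB α hα r hr))
    have h2 : sInf S ≤ sSup T := by
      by_contra hcon
      push_neg at hcon
      have h0 : (0 : ℝ) ≤ sSup T := le_csSup hTbdd hT0
      obtain ⟨x, hx1, hx2⟩ := exists_rat_btwn hcon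
      have hxpos : (0 : ℚ) < x := by
        have : (0 : ℝ) < (x : ℝ) := lt_of_le_of_lt h0 hx1
        exact_mod_cast this
      set p : ℕ := x.num.toNat with hp
      set q : ℕ := x.den with hq
      have hqpos : 0 < q := x.pos
      have hpq : ((p : ℝ) / q) = (x : ℝ) := by
        rw [Rat.cast_def]
        congr 1
        exact_mod_cast Int.toNat_of_nonneg (le_of_lt (Rat.num_pos.mpr hxpos))
      have hcond : ∀ U : Finset V, U.Nonempty →
          (p : ℝ) * U.card ≤ (q : ℝ) * ({e : E | ∃ v ∈ U, inc e v}.ncard : ℝ) := by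
        intro U hU
        have hrS : (({e : E | ∃ v ∈ U, inc e v}.ncard : ℝ) / U.card) ∈ S := ⟨U, hU, rfl⟩
        have hxr : (x : ℝ) ≤ ({e : E | ∃ v ∈ U, inc e v}.ncard : ℝ) / U.card :=
          le_trans (le_of_lt hx2) (csInf_le ⟨0, fun r ⟨W, hW, hrw⟩ => by
            rw [hrw]; positivity⟩ hrS)
        rw [← hpq] at hxr
        have hUpos : (0 : ℝ) < U.card := by exact_mod_cast Finset.card_pos.mpr hU
        have hqpos' : (0 : ℝ) < q := by exact_mod_cast hqpos
        rw [div_le_div_iff₀ hqpos' hUpos] at hxr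
        linarith
      obtain ⟨f, h0', h1', h2'⟩ := lemB inc hdeg hE p q hqpos hcond
      have hxT : (x : ℝ) ∈ T := ⟨f, h0', h1', fun v => by rw [← hpq]; exact h2' v⟩
      exact absurd (le_csSup hTbdd hxT) (not_le.mpr hx1)
    linarith
  · have hVempty : IsEmpty V := not_nonempty_iff.mp hV
    have hEempty : IsEmpty E := ⟨fun e => IsEmpty.elim hVempty (hE e).choose⟩
    have hSempty : S = ∅ := by
      rw [Set.eq_empty_iff_forall_notMem]
      rintro r ⟨U, ⟨v, _⟩, _⟩
      exact IsEmpty.elim hVempty v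
    have hTuniv : T = Set.univ := by
      rw [Set.eq_univ_iff_forall]
      intro α
      exact ⟨fun _ _ => 0, fun e => IsEmpty.elim hEempty e,
        fun e => IsEmpty.elim hEempty e, fun v => IsEmpty.elim hVempty v⟩
    rw [hSempty, hTuniv, Real.sInf_empty, Real.sSup_univ]
end

section
/- Let ℓ be a loss function with values in [0,1], H a hypothesis class, and A a learner. If A has transductive error at most ε on all transductive instances of size m+1 (i.e., for every S ∈ X^{m+1} and h ∈ H, (1/(m+1))·Σ_i ℓ(A(S_{−i}, h)(x_i), h(x_i)) ≤ ε), then for every H-realizable distribution D, the expected true error of A on i.i.d. samples of size m is at most ε: E_{S∼D^m}[L_D(A(S))] ≤ ε. -/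
open MeasureTheory

/-- Leave-one-out argument: if a learner `A` has transductive error at most
`ε` on all realizable transductive instances of size `m+1`, then for every `H`-realizable
distribution `D`, the expected true error of `A` on i.i.d. samples of size `m` is at most
`ε`. -/
theorem stmt_8 {X Y : Type*} [MeasurableSpace X] [MeasurableSpace Y]
    (ℓ : Y → Y → ℝ) (hℓ : ∀ y y', ℓ y y' ∈ Set.Icc (0:ℝ) 1)
    (H : Set (X → Y)) (m : ℕ) (ε : ℝ)
    (A : (Fin m → X × Y) → X → Y)
    (htrans : ∀ (S : Fin (m+1) → X) (h : X → Y), h ∈ H →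
      (1 / ((m:ℝ)+1)) * ∑ i : Fin (m+1),
          ℓ (A (fun j => (S (i.succAbove j), h (S (i.succAbove j)))) (S i)) (h (S i)) ≤ ε)
    (D : Measure (X × Y)) [IsProbabilityMeasure D]
    (hreal : ∃ h ∈ H, ∀ᵐ p ∂D, p.2 = h p.1)
    (hmeas : Measurable fun q : (Fin m → X × Y) × (X × Y) => ℓ (A q.1 q.2.1) q.2.2) :
    ∫ S, (∫ p, ℓ (A S p.1) p.2 ∂D) ∂(Measure.pi fun _ : Fin m => D) ≤ ε := by
  obtain ⟨h, hH, hae⟩ := hreal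
  have hmeasterm : ∀ i : Fin (m+1), Measurable
      (fun S : Fin (m+1) → X × Y => ℓ (A (fun j => S (i.succAbove j)) (S i).1) (S i).2) := by
    intro i
    have hg : Measurable (fun S : Fin (m+1) → X × Y =>
        ((fun j => S (i.succAbove j), S i) : (Fin m → X × Y) × (X × Y))) :=
      (measurable_pi_iff.2 fun j => measurable_pi_apply _).prodMk (measurable_pi_apply i)
    exact hmeas.comp hg
  have hintterm : ∀ i : Fin (m+1), Integrable
      (fun S : Fin (m+1) → X × Y => ℓ (A (fun j => S (i.succAbove j)) (S i).1) (S i).2)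
      (Measure.pi fun _ : Fin (m+1) => D) := by
    intro i
    refine ⟨(hmeasterm i).aestronglyMeasurable,
      HasFiniteIntegral.of_bounded (C := 1) (Filter.Eventually.of_forall fun S => ?_)⟩
    rw [Real.norm_eq_abs, abs_le]
    exact ⟨by linarith [(hℓ (A (fun j => S (i.succAbove j)) (S i).1) (S i).2).1],
      (hℓ (A (fun j => S (i.succAbove j)) (S i).1) (S i).2).2⟩
  have hintg : Integrable (fun q : (Fin m → X × Y) × (X × Y) => ℓ (A q.1 q.2.1) q.2.2)
      ((Measure.pi fun _ : Fin m => D).prod D) := by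
    refine ⟨hmeas.aestronglyMeasurable,
      HasFiniteIntegral.of_bounded (C := 1) (Filter.Eventually.of_forall fun q => ?_)⟩
    rw [Real.norm_eq_abs, abs_le]
    exact ⟨by linarith [(hℓ (A q.1 q.2.1) q.2.2).1], (hℓ (A q.1 q.2.1) q.2.2).2⟩
  -- each leave-one-out term has the same expectation, equal to the LHS
  have key : ∀ i : Fin (m+1),
      ∫ S, ℓ (A (fun j => S (i.succAbove j)) (S i).1) (S i).2
          ∂(Measure.pi fun _ : Fin (m+1) => D)
        = ∫ S, (∫ p, ℓ (A S p.1) p.2 ∂D) ∂(Measure.pi fun _ : Fin m => D) := by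
    intro i
    have hmp := measurePreserving_piFinSuccAbove (fun _ : Fin (m+1) => D) i
    have he := (MeasurableEquiv.piFinSuccAbove (fun _ : Fin (m+1) => X × Y) i).measurableEmbedding
    have h1 : ∫ S, ℓ (A (fun j => S (i.succAbove j)) (S i).1) (S i).2
          ∂(Measure.pi fun _ : Fin (m+1) => D)
        = ∫ q : (X × Y) × (Fin m → X × Y), ℓ (A q.2 q.1.1) q.1.2
            ∂(D.prod (Measure.pi fun _ : Fin m => D)) := by
      rw [← hmp.integral_comp he (fun q : (X × Y) × (Fin m → X × Y) => ℓ (A q.2 q.1.1) q.1.2)]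
      rfl
    rw [h1]
    exact (integral_prod_swap
      (fun q : (Fin m → X × Y) × (X × Y) => ℓ (A q.1 q.2.1) q.2.2)).trans
      (integral_prod _ hintg)
  -- a.e. over the product, all labels agree with h
  have haeAll : ∀ᵐ S ∂(Measure.pi fun _ : Fin (m+1) => D),
      ∀ j : Fin (m+1), (S j).2 = h ((S j).1) := by
    rw [MeasureTheory.ae_all_iff]
    intro j
    exact (Measure.tendsto_eval_ae_ae (μ := fun _ : Fin (m+1) => D) (i := j)).eventually hae
  -- pointwise bound a.e.
  have hbound : ∀ᵐ S ∂(Measure.pi fun _ : Fin (m+1) => D),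
      (1 / ((m:ℝ)+1)) * ∑ i : Fin (m+1),
        ℓ (A (fun j => S (i.succAbove j)) (S i).1) (S i).2 ≤ ε := by
    filter_upwards [haeAll] with S hS
    have hrw : ∀ i : Fin (m+1),
        ℓ (A (fun j => S (i.succAbove j)) (S i).1) (S i).2
        = ℓ (A (fun j => ((S (i.succAbove j)).1, h ((S (i.succAbove j)).1))) ((S i).1))
            (h ((S i).1)) := by
      intro i
      have h2 : (fun j => S (i.succAbove j))
          = fun j => ((S (i.succAbove j)).1, h ((S (i.succAbove j)).1)) := by
        funext j
        exact Prod.ext rfl (hS (i.succAbove j))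
      rw [h2, hS i]
    calc (1 / ((m:ℝ)+1)) * ∑ i : Fin (m+1),
          ℓ (A (fun j => S (i.succAbove j)) (S i).1) (S i).2
        = (1 / ((m:ℝ)+1)) * ∑ i : Fin (m+1),
            ℓ (A (fun j => ((S (i.succAbove j)).1, h ((S (i.succAbove j)).1))) ((S i).1))
              (h ((S i).1)) := by rw [Finset.sum_congr rfl fun i _ => hrw i]
      _ ≤ ε := htrans (fun k => (S k).1) h hH
  have havg : Integrable (fun S : Fin (m+1) → X × Y =>
      (1 / ((m:ℝ)+1)) * ∑ i : Fin (m+1),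
        ℓ (A (fun j => S (i.succAbove j)) (S i).1) (S i).2)
      (Measure.pi fun _ : Fin (m+1) => D) :=
    (integrable_finset_sum _ fun i _ => hintterm i).const_mul _
  have hεint : ∫ S, (1 / ((m:ℝ)+1)) * ∑ i : Fin (m+1),
        ℓ (A (fun j => S (i.succAbove j)) (S i).1) (S i).2
        ∂(Measure.pi fun _ : Fin (m+1) => D) ≤ ε := by
    calc ∫ S, (1 / ((m:ℝ)+1)) * ∑ i : Fin (m+1),
          ℓ (A (fun j => S (i.succAbove j)) (S i).1) (S i).2
          ∂(Measure.pi fun _ : Fin (m+1) => D)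
        ≤ ∫ _, ε ∂(Measure.pi fun _ : Fin (m+1) => D) :=
          integral_mono_ae havg (integrable_const ε) hbound
      _ = ε := by simp
  have heq : ∫ S, (1 / ((m:ℝ)+1)) * ∑ i : Fin (m+1),
        ℓ (A (fun j => S (i.succAbove j)) (S i).1) (S i).2
        ∂(Measure.pi fun _ : Fin (m+1) => D)
      = ∫ S, (∫ p, ℓ (A S p.1) p.2 ∂D) ∂(Measure.pi fun _ : Fin m => D) := by
    rw [integral_const_mul, integral_finset_sum _ fun i _ => hintterm i]
    simp only [key, Finset.sum_const, Finset.card_univ, Fintype.card_fin, nsmul_eq_mul]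
    have hne : ((m:ℝ)+1) ≠ 0 := by positivity
    push_cast
    field_simp
  rw [← heq]
  exact hεint
end

section
/- For every n ∈ ℕ there exists m ∈ ℕ such that m independent uniform draws from a set of n elements yield exactly n − 1 distinct elements with probability at least 1/e. -/
/-- Stirling numbers of the second kind. -/
def St : ℕ → ℕ → ℕ
  | 0, 0 => 1
  | 0, _ + 1 => 0
  | _ + 1, 0 => 0
  | m + 1, k + 1 => (k + 1) * St m (k + 1) + St m k

lemma St_zero_right (m : ℕ) (hm : m ≠ 0) : St m 0 = 0 := by
  cases m with
  | zero => simp at hm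
  | succ m => rfl

lemma St_succ_succ (m k : ℕ) : St (m+1) (k+1) = (k+1) * St m (k+1) + St m k := rfl

lemma St_eq_zero_of_lt : ∀ m k : ℕ, m < k → St m k = 0 := by
  intro m
  induction m with
  | zero => intro k hk; cases k with
    | zero => omega
    | succ k => rfl
  | succ m ih =>
    intro k hk
    cases k with
    | zero => omega
    | succ k =>
      rw [St_succ_succ, ih (k+1) (by omega), ih k (by omega)]; ring
lemma St_self (m : ℕ) : St m m = 1 := by
  induction m with
  | zero => rfl
  | succ m ih => rw [St_succ_succ, St_eq_zero_of_lt m (m+1) (by omega), ih]; ring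

lemma St_pos : ∀ m k : ℕ, 1 ≤ k → k ≤ m → 1 ≤ St m k := by
  intro m
  induction m with
  | zero => intro k h1 h2; omega
  | succ m ih =>
    intro k h1 h2
    cases k with
    | zero => omega
    | succ k =>
      rcases Nat.lt_or_ge k m with h | h
      · rw [St_succ_succ]
        have := ih (k+1) (by omega) (by omega)
        nlinarith
      · have hk : k = m := by omega
        subst hk
        rw [St_self]

/-- if `St m k = 0` and `k ≥ 1` then `m < k`. -/
lemma lt_of_St_eq_zero (m k : ℕ) (h : St m k = 0) (hk : 1 ≤ k) : m < k := by
  by_contra hc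
  have := St_pos m k hk (by omega)
  omega

lemma St_succ_succ' (m k : ℕ) : St (m+1) (k+1) = (k+1) * St m (k+1) + St m k := rfl

/-- Newton-type strengthened log-concavity of Stirling numbers. -/
lemma St_newton : ∀ m k : ℕ, (k+2) * (St m k * St m (k+2)) ≤ (k+1) * (St m (k+1) * St m (k+1)) := by
  intro m
  induction m with
  | zero =>
    intro k
    have : St 0 (k+2) = 0 := St_eq_zero_of_lt 0 (k+2) (by omega)
    simp [this]
  | succ m ih =>
    intro k
    cases k with
    | zero =>
      simp [show St (m+1) 0 = 0 from by cases m <;> rfl]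
    | succ j =>
      show (j+3) * (St (m+1) (j+1) * St (m+1) (j+3)) ≤ (j+2) * (St (m+1) (j+2) * St (m+1) (j+2))
      have e1 : St (m+1) (j+1) = (j+1) * St m (j+1) + St m j := St_succ_succ m j
      have e2 : St (m+1) (j+2) = (j+2) * St m (j+2) + St m (j+1) := St_succ_succ m (j+1)
      have e3 : St (m+1) (j+3) = (j+3) * St m (j+3) + St m (j+2) := St_succ_succ m (j+2)
      rw [e1, e2, e3]
      set a := St m (j+2) with ha
      set b := St m (j+1) with hb
      set c := St m j with hc
      set d := St m (j+3) with hd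
      have H1 : (j+3) * (b * d) ≤ (j+2) * (a * a) := ih (j+1)
      have H2 : (j+2) * (c * a) ≤ (j+1) * (b * b) := ih j
      have H3 : (j+3) * (c * d) ≤ (j+1) * (a * b) := by
        rcases Nat.eq_zero_or_pos a with haz | hap
        · have hd0 : d = 0 := by
            rw [hd]; exact St_eq_zero_of_lt m (j+3)
              (by have := lt_of_St_eq_zero m (j+2) haz (by omega); omega)
          simp [hd0]
        rcases Nat.eq_zero_or_pos b with hbz | hbp
        · have hd0 : d = 0 := by
            rw [hd]; exact St_eq_zero_of_lt m (j+3)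
              (by have := lt_of_St_eq_zero m (j+1) hbz (by omega); omega)
          simp [hd0]
        · have key : ((j+2) * (a * b)) * ((j+3) * (c * d)) ≤ ((j+2) * (a * b)) * ((j+1) * (a * b)) := by
            calc ((j+2) * (a * b)) * ((j+3) * (c * d))
                = ((j+3) * (b * d)) * ((j+2) * (c * a)) := by ring
              _ ≤ ((j+2) * (a * a)) * ((j+1) * (b * b)) := Nat.mul_le_mul H1 H2
              _ = ((j+2) * (a * b)) * ((j+1) * (a * b)) := by ring
          exact Nat.le_of_mul_le_mul_left key (by positivity)
      have hb2 : c * a ≤ b * b := by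
        have h' : (j+1) * (c * a) ≤ (j+1) * (b*b) := le_trans (by nlinarith) H2
        exact Nat.le_of_mul_le_mul_left h' (by omega)
      have T1 : (j+1)*((j+3)*(j+3))*(b*d) ≤ (j+2)*((j+2)*(j+2))*(a*a) := by
        have h' : (j+1)*((j+3)*(j+3)) ≤ (j+2)*((j+2)*(j+3)) := by nlinarith
        calc (j+1)*((j+3)*(j+3))*(b*d) ≤ (j+2)*((j+2)*(j+3))*(b*d) :=
              Nat.mul_le_mul_right _ h'
          _ = (j+2)*(j+2)*((j+3)*(b*d)) := by ring
          _ ≤ (j+2)*(j+2)*((j+2)*(a*a)) := Nat.mul_le_mul_left _ H1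
          _ = (j+2)*((j+2)*(j+2))*(a*a) := by ring
      have T2 : (j+1)*(j+3)*(a*b) + (j+3)*((j+3)*(c*d)) ≤ 2*((j+2)*(j+2))*(a*b) := by
        have h' : (j+3)*((j+3)*(c*d)) ≤ (j+3)*((j+1)*(a*b)) := Nat.mul_le_mul_left _ H3
        have h'' : (j+1)*(j+3)*(a*b) + (j+3)*((j+1)*(a*b)) = 2*((j+1)*(j+3))*(a*b) := by ring
        have h3 : 2*((j+1)*(j+3))*(a*b) ≤ 2*((j+2)*(j+2))*(a*b) :=
          Nat.mul_le_mul_right _ (by nlinarith)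
        omega
      have T3 : (j+3)*(c*a) ≤ (j+2)*(b*b) := by
        have h' : (j+3)*(c*a) = (j+2)*(c*a) + c*a := by ring
        have h2' : (j+2)*(c*a) ≤ (j+1)*(b*b) := H2
        have : (j+1)*(b*b) + b*b = (j+2)*(b*b) := by ring
        omega
      calc (j+3) * (((j+1)*b + c) * ((j+3)*d + a))
          = (j+1)*((j+3)*(j+3))*(b*d) + ((j+1)*(j+3)*(a*b) + (j+3)*((j+3)*(c*d))) + (j+3)*(c*a) := by ring
        _ ≤ (j+2)*((j+2)*(j+2))*(a*a) + 2*((j+2)*(j+2))*(a*b) + (j+2)*(b*b) :=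
            Nat.add_le_add (Nat.add_le_add T1 T2) T3
        _ = (j+2) * (((j+2)*a + b) * ((j+2)*a + b)) := by ring

/-- plain log-concavity -/
lemma St_logconcave (m k : ℕ) : St m k * St m (k+2) ≤ St m (k+1) * St m (k+1) := by
  have h := St_newton m k
  have h2 : (k+1) * (St m k * St m (k+2)) ≤ (k+1) * (St m (k+1) * St m (k+1)) := by
    calc (k+1) * (St m k * St m (k+2)) ≤ (k+2) * (St m k * St m (k+2)) :=
          Nat.mul_le_mul_right _ (by omega)
      _ ≤ (k+1) * (St m (k+1) * St m (k+1)) := h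
  exact Nat.le_of_mul_le_mul_left h2 (by omega)

/-- going down from a local rise -/
lemma St_le_of_ge_pred : ∀ t, ∀ m, 1 ≤ t → t ≤ m → St m (t-1) ≤ St m t →
    ∀ i, i ≤ t → St m i ≤ St m t := by
  intro t
  induction t with
  | zero => omega
  | succ t ih =>
    intro m _ hm h i hi
    rcases Nat.eq_or_lt_of_le hi with he | hlt
    · subst he; exact le_rfl
    -- i ≤ t; show St m t ≤ St m (t+1) is h (since t+1-1 = t), and then recurse
    have ht : St m t ≤ St m (t+1) := by simpa using h
    cases Nat.eq_zero_or_pos t with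
    | inl h0 =>
      subst h0
      have : St m 0 = 0 := St_zero_right m (by omega)
      interval_cases i
      simp [this]
    | inr htpos =>
      -- St m (t-1) ≤ St m t via log-concavity
      have hb : 1 ≤ St m t := St_pos m t htpos (by omega)
      have lc : St m (t-1) * St m (t+1) ≤ St m t * St m t := by
        have := St_logconcave m (t-1)
        have e1 : t - 1 + 1 = t := by omega
        have e2 : t - 1 + 2 = t + 1 := by omega
        rwa [e1, e2] at this
      have hd : St m (t-1) ≤ St m t := by
        by_contra hc
        push_neg at hc
        have : St m t * St m (t+1) ≤ St m (t-1) * St m (t+1) :=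
          Nat.mul_le_mul_right _ (by omega)
        nlinarith
      have := ih m htpos (by omega) hd i (by omega)
      exact le_trans this ht

/-- going up: if nonincreasing step at t, stays below afterwards -/
lemma St_le_of_ge_succ (m t : ℕ) (h : St m (t+1) ≤ St m t) :
    ∀ d, St m (t+1+d) ≤ St m (t+d) ∧ St m (t+d) ≤ St m t := by
  intro d
  induction d with
  | zero => exact ⟨by simpa using h, le_rfl⟩
  | succ d ih =>
    obtain ⟨h1, h2⟩ := ih
    have step : St m (t+d+2) ≤ St m (t+d+1) := by
      rcases Nat.eq_zero_or_pos (St m (t+d+1)) with hz | hp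
      · have : m < t+d+1 := lt_of_St_eq_zero m (t+d+1) hz (by omega)
        have : St m (t+d+2) = 0 := St_eq_zero_of_lt m _ (by omega)
        omega
      · have lc := St_logconcave m (t+d)
        have h1' : St m (t+d+1) ≤ St m (t+d) := by
          rwa [show t+1+d = t+d+1 from by omega] at h1
        by_contra hc
        push_neg at hc
        nlinarith [h1', Nat.mul_le_mul h1' (le_of_lt hc)]
    constructor
    · have e : t+1+(d+1) = t+d+2 := by omega
      have e2 : t+(d+1) = t+d+1 := by omega
      rw [e, e2]; exact step
    · have e2 : t+(d+1) = t+d+1 := by omega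
      rw [e2]
      calc St m (t+d+1) ≤ St m (t+d) := by
            have e : t+1+d = t+d+1 := by omega
            rwa [e] at h1
        _ ≤ St m t := h2

open Finset in
lemma St_sum_le : ∀ m k : ℕ, (∑ j ∈ range (k+1), St m j) ≤ k ^ m := by
  intro m
  induction m with
  | zero =>
    intro k
    rw [Finset.sum_range_succ']
    have : ∀ j, St 0 (j+1) = 0 := fun j => rfl
    simp [this, St]
  | succ m ih =>
    intro k
    have h0 : (∑ j ∈ range (k+1), St (m+1) j) = ∑ j ∈ range k, St (m+1) (j+1) := by
      rw [Finset.sum_range_succ']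
      simp [St_zero_right (m+1) (by omega)]
    rw [h0]
    have h1 : (∑ j ∈ range k, St (m+1) (j+1))
        = (∑ j ∈ range k, (j+1) * St m (j+1)) + ∑ j ∈ range k, St m j := by
      rw [← Finset.sum_add_distrib]
      exact Finset.sum_congr rfl fun j _ => St_succ_succ' m j
    rw [h1]
    have h2 : (∑ j ∈ range k, (j+1) * St m (j+1))
        = ∑ i ∈ range (k+1), i * St m i := by
      rw [Finset.sum_range_succ']
      simp
    rw [h2, Finset.sum_range_succ]
    have h3 : (∑ i ∈ range k, i * St m i) + (∑ j ∈ range k, St m j)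
        = ∑ i ∈ range k, (i+1) * St m i := by
      rw [← Finset.sum_add_distrib]
      exact Finset.sum_congr rfl fun i _ => by ring
    calc (∑ i ∈ range k, i * St m i) + k * St m k + ∑ j ∈ range k, St m j
        = (∑ i ∈ range k, (i+1) * St m i) + k * St m k := by omega
      _ ≤ (∑ i ∈ range k, k * St m i) + k * St m k := by
          apply Nat.add_le_add_right
          apply Finset.sum_le_sum
          intro i hi
          exact Nat.mul_le_mul_right _ (by simp at hi; omega)
      _ = k * ∑ i ∈ range (k+1), St m i := by
          rw [Finset.sum_range_succ, Nat.mul_add, Finset.mul_sum]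
      _ ≤ k * k ^ m := Nat.mul_le_mul_left _ (ih k)
      _ = k ^ (m+1) := by ring

lemma St_le_pow (m k : ℕ) : St m k ≤ k ^ m := by
  refine le_trans ?_ (St_sum_le m k)
  exact Finset.single_le_sum (f := fun j => St m j) (fun i _ => Nat.zero_le _)
    (Finset.self_mem_range_succ k)

lemma pow_ge_St : ∀ d t : ℕ, 1 ≤ t → t ^ d ≤ St (t + d) t := by
  intro d
  induction d with
  | zero => intro t ht; simp [St_self]
  | succ d ih =>
    intro t ht
    obtain ⟨s, rfl⟩ : ∃ s, t = s + 1 := ⟨t - 1, by omega⟩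
    have e : (s+1) + (d+1) = ((s+1)+d) + 1 := by omega
    rw [e, St_succ_succ']
    calc (s+1) ^ (d+1) = (s+1) * (s+1)^d := by ring
      _ ≤ (s+1) * St ((s+1)+d) (s+1) := Nat.mul_le_mul_left _ (ih (s+1) (by omega))
      _ ≤ (s+1) * St ((s+1)+d) (s+1) + St ((s+1)+d) s := Nat.le_add_right _ _

lemma binom2 : ∀ d x : ℕ, x ^ (d+1) + (d+1) * x ^ d ≤ (x+1) ^ (d+1) := by
  intro d
  induction d with
  | zero => intro x; simp [pow_succ]
  | succ d ih =>
    intro x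
    have h := ih x
    calc x ^ (d+2) + (d+2) * x ^ (d+1)
        ≤ x ^ (d+2) + (d+2) * x ^ (d+1) + (d+1) * x ^ d := Nat.le_add_right _ _
      _ = (x+1) * (x ^ (d+1) + (d+1) * x ^ d) := by ring
      _ ≤ (x+1) * (x+1) ^ (d+1) := Nat.mul_le_mul_left _ h
      _ = (x+1) ^ (d+2) := by ring

/-- key: the doubling bound `2·(t-1)^(t-1) ≤ t^(t-1)` for `t ≥ 2` -/
lemma double_bound (t : ℕ) (ht : 2 ≤ t) : 2 * (t-1) ^ (t-1) ≤ t ^ (t-1) := by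
  obtain ⟨s, rfl⟩ : ∃ s, t = s + 2 := ⟨t - 2, by omega⟩
  have h := binom2 s (s+1)
  have e : s + 2 - 1 = s + 1 := by omega
  rw [e]
  calc 2 * (s+1) ^ (s+1) = (s+1)^(s+1) + (s+1) * (s+1) ^ s := by ring
    _ ≤ (s+1+1) ^ (s+1) := h
    _ = (s+2) ^ (s+1) := by norm_num

lemma exists_rise (t : ℕ) (ht : 1 ≤ t) : ∃ m, t ≤ m ∧ St m (t-1) ≤ St m t := by
  rcases Nat.lt_or_ge t 2 with h1 | h2
  · have : t = 1 := by omega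
    subst this
    exact ⟨1, le_rfl, by simp [St_zero_right 1 (by omega), Nat.zero_le]⟩
  · -- t ≥ 2
    set s := t - 1 with hs
    have hs1 : 1 ≤ s := by omega
    refine ⟨t + s * t ^ 2, by omega, ?_⟩
    have hlow : t ^ (s * t ^ 2) ≤ St (t + s * t ^ 2) t := pow_ge_St (s * t^2) t (by omega)
    have hup : St (t + s * t ^ 2) s ≤ s ^ (t + s * t ^ 2) := St_le_pow _ s
    refine le_trans hup (le_trans ?_ hlow)
    -- s ^ (t + s*t²) ≤ t ^ (s*t²)
    have key : s ^ t * s ^ (s * t ^ 2) ≤ t ^ (s * t ^ 2) := by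
      have hd : 2 ^ (t^2) * s ^ (s * t ^ 2) ≤ t ^ (s * t^2) := by
        have e1 : t ^ (s * t ^ 2) = (t ^ s) ^ (t ^ 2) := by rw [← pow_mul]
        have e2 : s ^ (s * t ^ 2) = (s ^ s) ^ (t ^ 2) := by rw [← pow_mul]
        rw [e1, e2, ← Nat.mul_pow]
        apply Nat.pow_le_pow_left
        have := double_bound t h2
        rw [← hs] at this
        calc 2 * s ^ s ≤ t ^ (t - 1) := this
          _ = t ^ s := by rw [hs]
      refine le_trans ?_ hd
      apply Nat.mul_le_mul_right
      calc s ^ t ≤ (2 ^ t) ^ t := Nat.pow_le_pow_left (by have := Nat.lt_two_pow_self (n := t); omega) t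
        _ = 2 ^ (t * t) := by rw [← pow_mul]
        _ = 2 ^ (t ^ 2) := by ring_nf
    calc s ^ (t + s * t ^ 2) = s ^ t * s ^ (s * t^2) := by rw [pow_add]
      _ ≤ t ^ (s * t^2) := key

/-- Main structural result: every `t ≥ 1` is the argmax of `St m ·` for some `m ≥ t`. -/
lemma exists_argmax (t : ℕ) (ht : 1 ≤ t) : ∃ m, t ≤ m ∧ ∀ k, St m k ≤ St m t := by
  classical
  have hexP : ∃ m, t ≤ m ∧ St m (t-1) ≤ St m t := exists_rise t ht
  obtain ⟨hMt, hMrise⟩ := Nat.find_spec hexP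
  set M := Nat.find hexP with hM
  have hsucc : St M (t+1) ≤ St M t := by
    rcases Nat.eq_or_lt_of_le hMt with he | hlt
    · rw [← he]
      rw [St_eq_zero_of_lt t (t+1) (by omega)]
      exact Nat.zero_le _
    · obtain ⟨u, rfl⟩ : ∃ u, t = u + 1 := ⟨t-1, by omega⟩
      obtain ⟨N, hN⟩ : ∃ N, M = N + 1 := ⟨M-1, by omega⟩
      have hle : u + 1 ≤ N := by omega
      have hnP : ¬ (u + 1 ≤ N ∧ St N (u+1-1) ≤ St N (u+1)) :=
        Nat.find_min hexP (show N < M by omega)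
      have hlt' : St N (u+1) < St N u := by
        by_contra hc
        push_neg at hc
        exact hnP ⟨hle, by simpa using hc⟩
      have hb : 1 ≤ St N (u+1) := St_pos N (u+1) (by omega) hle
      have hnew : (u+2) * (St N u * St N (u+2)) ≤ (u+1) * (St N (u+1) * St N (u+1)) :=
        St_newton N u
      rw [hN]
      show St (N+1) (u+2) ≤ St (N+1) (u+1)
      rw [St_succ_succ' N (u+1), St_succ_succ' N u]
      set a := St N u with ha
      set b := St N (u+1) with hb'
      set c := St N (u+2) with hc'
      have key : a * ((u+2)*c + b) ≤ a * ((u+1)*b + a) := by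
        calc a * ((u+2)*c + b) = (u+2)*(a*c) + a*b := by ring
          _ ≤ (u+1)*(b*b) + a*b := Nat.add_le_add_right hnew _
          _ ≤ (u+1)*(a*b) + a*b := by
              have hbb : b*b ≤ a*b := Nat.mul_le_mul_right b (le_of_lt hlt')
              exact Nat.add_le_add_right (Nat.mul_le_mul_left _ hbb) _
          _ = a * ((u+1)*b + b) := by ring
          _ ≤ a * ((u+1)*b + a) := Nat.mul_le_mul_left _ (by omega)
      exact Nat.le_of_mul_le_mul_left key (by omega)
  refine ⟨M, hMt, ?_⟩
  intro k
  rcases le_or_gt k t with hk | hk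
  · exact St_le_of_ge_pred t M ht hMt hMrise k hk
  · have h2 := (St_le_of_ge_succ M t hsucc (k - t)).2
    rwa [show t + (k - t) = k by omega] at h2

open Finset

/-- number of functions `Fin m → Fin n` with image of size `j` -/
def Nc (n m j : ℕ) : ℕ :=
  (Finset.univ.filter (fun f : Fin m → Fin n => (Finset.univ.image f).card = j)).card

lemma card_insert_filter (n j : ℕ) (s : Finset (Fin n)) :
    (Finset.univ.filter (fun x : Fin n => (insert x s).card = j)).card
      = (if s.card = j then s.card else 0) + (if s.card + 1 = j then n - s.card else 0) := by
  by_cases h1 : s.card = j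
  · have h2 : ¬ (s.card + 1 = j) := by omega
    rw [if_pos h1, if_neg h2]
    have hs : (Finset.univ.filter (fun x : Fin n => (insert x s).card = j)) = s := by
      ext x
      simp only [Finset.mem_filter, Finset.mem_univ, true_and]
      by_cases hx : x ∈ s
      · simp [Finset.insert_eq_self.2 hx, hx, h1]
      · rw [Finset.card_insert_of_notMem hx]
        simp [hx]; omega
    rw [hs]; omega
  · rw [if_neg h1]
    by_cases h2 : s.card + 1 = j
    · rw [if_pos h2]
      have hs : (Finset.univ.filter (fun x : Fin n => (insert x s).card = j)) = sᶜ := by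
        ext x
        simp only [Finset.mem_filter, Finset.mem_univ, true_and, Finset.mem_compl]
        by_cases hx : x ∈ s
        · simp [Finset.insert_eq_self.2 hx, hx, h1]
        · rw [Finset.card_insert_of_notMem hx]
          simp [hx]; omega
      rw [hs, Finset.card_compl]
      simp
    · rw [if_neg h2]
      have hs : (Finset.univ.filter (fun x : Fin n => (insert x s).card = j)) = ∅ := by
        apply Finset.filter_eq_empty_iff.2
        intro x _
        by_cases hx : x ∈ s
        · rw [Finset.insert_eq_self.2 hx]; exact h1
        · rw [Finset.card_insert_of_notMem hx]; exact h2
      simp [hs]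

lemma image_cons (n m : ℕ) (x : Fin n) (g : Fin m → Fin n) :
    (Finset.univ.image (Fin.cons x g : Fin (m+1) → Fin n)) = insert x (Finset.univ.image g) := by
  ext y
  simp only [Finset.mem_image, Finset.mem_univ, true_and, Finset.mem_insert]
  constructor
  · rintro ⟨i, rfl⟩
    rcases Fin.eq_zero_or_eq_succ i with h | ⟨i', rfl⟩
    · subst h; left; simp
    · right; exact ⟨i', by simp⟩
  · rintro (rfl | ⟨i, rfl⟩)
    · exact ⟨0, by simp⟩
    · exact ⟨i.succ, by simp⟩

lemma Nc_as_sum (n m j : ℕ) :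
    Nc n (m+1) j
      = ∑ g : Fin m → Fin n,
          (Finset.univ.filter
            (fun x : Fin n => (insert x (Finset.univ.image g)).card = j)).card := by
  classical
  rw [Nc]
  rw [Finset.card_eq_sum_card_fiberwise
    (f := fun f : Fin (m+1) → Fin n => Fin.tail f) (t := Finset.univ)
    (fun f _ => Finset.mem_univ _)]
  apply Finset.sum_congr rfl
  intro g _
  apply Finset.card_bij' (fun f _ => f 0) (fun x _ => Fin.cons x g)
  · intro f hf
    simp only [Finset.mem_filter, Finset.mem_univ, true_and] at hf
    rw [← hf.2]
    exact Fin.cons_self_tail f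
  · intro x hx
    exact Fin.cons_zero (α := fun _ => Fin n) x g
  · intro f hf
    simp only [Finset.mem_filter, Finset.mem_univ, true_and] at hf ⊢
    obtain ⟨h1, h2⟩ := hf
    rw [← Fin.cons_self_tail f, image_cons, h2] at h1
    exact h1
  · intro x hx
    simp only [Finset.mem_filter, Finset.mem_univ, true_and] at hx ⊢
    constructor
    · rw [image_cons]; exact hx
    · exact Fin.tail_cons (α := fun _ => Fin n) x g

lemma Nc_succ_zero (n m : ℕ) : Nc n (m+1) 0 = 0 := by
  rw [Nc]
  have : (Finset.univ.filter
      (fun f : Fin (m+1) → Fin n => (Finset.univ.image f).card = 0)) = ∅ := by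
    apply Finset.filter_eq_empty_iff.2
    intro f _
    have : f 0 ∈ Finset.univ.image f := Finset.mem_image_of_mem f (Finset.mem_univ _)
    intro hc
    rw [Finset.card_eq_zero] at hc
    rw [hc] at this
    exact absurd this (Finset.notMem_empty _)
  rw [this]; rfl

lemma Nc_succ (n m j : ℕ) :
    Nc n (m+1) (j+1) = (j+1) * Nc n m (j+1) + (n - j) * Nc n m j := by
  classical
  rw [Nc_as_sum]
  have key : ∀ g : Fin m → Fin n,
      (Finset.univ.filter
        (fun x : Fin n => (insert x (Finset.univ.image g)).card = j+1)).card
      = (if (Finset.univ.image g).card = j+1 then (j+1) else 0)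
        + (if (Finset.univ.image g).card = j then (n - j) else 0) := by
    intro g
    rw [card_insert_filter]
    congr 1
    · by_cases h : (Finset.univ.image g).card = j+1 <;> simp [h]
    · by_cases h : (Finset.univ.image g).card = j
      · rw [if_pos h, if_pos (by omega), h]
      · rw [if_neg h, if_neg (by omega)]
  rw [Finset.sum_congr rfl (fun g _ => key g), Finset.sum_add_distrib]
  congr 1
  · rw [← Finset.sum_filter, Finset.sum_const, smul_eq_mul, Nc, Nat.mul_comm]
  · rw [← Finset.sum_filter, Finset.sum_const, smul_eq_mul, Nc, Nat.mul_comm]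

lemma Nc_zero (n j : ℕ) : Nc n 0 j = if j = 0 then 1 else 0 := by
  classical
  rw [Nc]
  have himg : ∀ f : Fin 0 → Fin n, (Finset.univ.image f) = ∅ := by
    intro f
    simp [Finset.univ_eq_empty]
  by_cases h : j = 0
  · subst h
    rw [if_pos rfl]
    have : (Finset.univ.filter
        (fun f : Fin 0 → Fin n => (Finset.univ.image f).card = 0)) = Finset.univ := by
      apply Finset.filter_true_of_mem
      intro f _
      rw [himg f]
      rfl
    rw [this, Finset.card_univ]
    simp [Fintype.card_fun]
  · rw [if_neg h]
    have : (Finset.univ.filter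
        (fun f : Fin 0 → Fin n => (Finset.univ.image f).card = j)) = ∅ := by
      apply Finset.filter_eq_empty_iff.2
      intro f _
      rw [himg f]
      simp only [Finset.card_empty]
      omega
    rw [this]
    simp

lemma Nc_formula (n : ℕ) : ∀ m j : ℕ, Nc n m j = Nat.choose n j * (Nat.factorial j * St m j) := by
  intro m
  induction m with
  | zero =>
    intro j
    rw [Nc_zero]
    cases j with
    | zero => simp [St]
    | succ j => simp [show St 0 (j+1) = 0 from rfl]
  | succ m ih =>
    intro j
    cases j with
    | zero =>
      rw [Nc_succ_zero, St_zero_right (m+1) (by omega)]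
      simp
    | succ j =>
      rw [Nc_succ, ih (j+1), ih j, St_succ_succ']
      have key : (n - j) * (Nat.choose n j * Nat.factorial j)
          = Nat.choose n (j+1) * Nat.factorial (j+1) := by
        rw [Nat.factorial_succ]
        have h := Nat.choose_succ_right_eq n j
        calc (n - j) * (Nat.choose n j * Nat.factorial j)
            = (Nat.choose n j * (n - j)) * Nat.factorial j := by ring
          _ = (Nat.choose n (j+1) * (j+1)) * Nat.factorial j := by rw [h]
          _ = Nat.choose n (j+1) * ((j+1) * Nat.factorial j) := by ring
      calc (j+1) * (Nat.choose n (j+1) * (Nat.factorial (j+1) * St m (j+1)))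
            + (n - j) * (Nat.choose n j * (Nat.factorial j * St m j))
          = (j+1) * (Nat.choose n (j+1) * (Nat.factorial (j+1) * St m (j+1)))
            + ((n - j) * (Nat.choose n j * Nat.factorial j)) * St m j := by ring
        _ = (j+1) * (Nat.choose n (j+1) * (Nat.factorial (j+1) * St m (j+1)))
            + (Nat.choose n (j+1) * Nat.factorial (j+1)) * St m j := by rw [key]
        _ = Nat.choose n (j+1) * (Nat.factorial (j+1) * ((j+1) * St m (j+1) + St m j)) := by ring

lemma Nc_total (n m : ℕ) : ∑ j ∈ range (n+1), Nc n m j = n ^ m := by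
  classical
  have h := Finset.card_eq_sum_card_fiberwise
    (f := fun f : Fin m → Fin n => (Finset.univ.image f).card) (s := Finset.univ)
    (t := Finset.range (n+1)) ?_
  · rw [Finset.card_univ] at h
    have e : ∀ j, Nc n m j = (Finset.univ.filter
        (fun f : Fin m → Fin n => (Finset.univ.image f).card = j)).card := fun j => rfl
    calc ∑ j ∈ range (n+1), Nc n m j
        = ∑ j ∈ range (n+1), (Finset.univ.filter
            (fun f : Fin m → Fin n => (Finset.univ.image f).card = j)).card :=
          Finset.sum_congr rfl fun j _ => e j
      _ = Fintype.card (Fin m → Fin n) := h.symm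
      _ = n ^ m := by simp [Fintype.card_fun]
  · intro f _
    rw [Finset.mem_coe, Finset.mem_range]
    have : (Finset.univ.image f).card ≤ n := by
      calc (Finset.univ.image f).card ≤ (Finset.univ : Finset (Fin n)).card :=
        Finset.card_le_card (Finset.subset_univ _)
      _ = n := by simp
    exact Nat.lt_succ_of_le this

/-- For every `n` there exists `m` such that `m` independent uniform draws
from an `n`-element set yield exactly `n − 1` distinct elements with probability at least
`1/e`. -/
theorem stmt_10 : ∀ n : ℕ, ∃ m : ℕ,
    (1 : ℝ) / Real.exp 1 ≤
      (Nat.card {f : Fin m → Fin n // (Finset.univ.image f).card = n - 1} : ℝ) /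
        (n ^ m : ℕ) := by
  intro n
  classical
  have hcard : ∀ m : ℕ, (Nat.card {f : Fin m → Fin n // (Finset.univ.image f).card = n - 1})
      = Nc n m (n-1) := by
    intro m
    rw [Nat.card_eq_fintype_card, Fintype.card_subtype]
    rfl
  have he1 : (1:ℝ) ≤ Real.exp 1 := by
    have := Real.add_one_le_exp (1:ℝ)
    linarith
  have hepos : (0:ℝ) < Real.exp 1 := Real.exp_pos 1
  rcases Nat.lt_or_ge n 2 with hn | hn
  · -- n = 0 or 1 : take m = 0
    refine ⟨0, ?_⟩
    rw [hcard 0]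
    have h1 : Nc n 0 (n-1) = 1 := by
      interval_cases n <;> decide
    rw [h1, pow_zero]
    push_cast
    rw [div_one]
    rw [div_le_one hepos]
    exact he1
  · -- n ≥ 2
    obtain ⟨m, hm, hmax⟩ := exists_argmax (n-1) (by omega)
    refine ⟨m, ?_⟩
    rw [hcard m]
    have hSt : 1 ≤ St m (n-1) := St_pos m (n-1) (by omega) hm
    have h1 : Nat.choose n (n-1) = n := by
      calc Nat.choose n (n-1) = Nat.choose n 1 := Nat.choose_symm (by omega)
        _ = n := Nat.choose_one_right n
    have hNc : Nc n m (n-1) = Nat.factorial n * St m (n-1) := by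
      rw [Nc_formula, h1]
      calc n * (Nat.factorial (n-1) * St m (n-1))
          = (n * Nat.factorial (n-1)) * St m (n-1) := by ring
        _ = Nat.factorial n * St m (n-1) := by
            rw [Nat.mul_factorial_pred (by omega : n ≠ 0)]
    have hup : (n ^ m : ℕ) ≤ (∑ j ∈ range (n+1), Nat.choose n j * Nat.factorial j) * St m (n-1) := by
      rw [← Nc_total n m, Finset.sum_mul]
      apply Finset.sum_le_sum
      intro j _
      rw [Nc_formula]
      calc Nat.choose n j * (Nat.factorial j * St m j)
          ≤ Nat.choose n j * (Nat.factorial j * St m (n-1)) :=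
            Nat.mul_le_mul_left _ (Nat.mul_le_mul_left _ (hmax j))
        _ = Nat.choose n j * Nat.factorial j * St m (n-1) := by ring
    have hsum : (∑ j ∈ range (n+1), (Nat.choose n j * Nat.factorial j : ℝ))
        ≤ (Nat.factorial n : ℝ) * Real.exp 1 := by
      have hre : (∑ j ∈ range (n+1), (Nat.choose n j * Nat.factorial j : ℝ))
          = ∑ i ∈ range (n+1), (Nat.factorial n : ℝ) * (1 / Nat.factorial i) := by
        rw [← Finset.sum_range_reflect (fun j => (Nat.choose n j * Nat.factorial j : ℝ)) (n+1)]
        apply Finset.sum_congr rfl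
        intro i hi
        rw [Finset.mem_range] at hi
        have e1 : n + 1 - 1 - i = n - i := by omega
        rw [e1]
        have key : Nat.choose n (n-i) * Nat.factorial (n-i) * Nat.factorial i
            = Nat.factorial n := by
          have h2 := Nat.choose_mul_factorial_mul_factorial (show n - i ≤ n by omega)
          rw [show n - (n-i) = i by omega] at h2
          exact h2
        have hipos : (0:ℝ) < Nat.factorial i := by positivity
        field_simp
        rw [← key]
        push_cast
        ring
      rw [hre, ← Finset.mul_sum]
      apply mul_le_mul_of_nonneg_left
      · have h := Real.sum_le_exp_of_nonneg (by norm_num : (0:ℝ) ≤ 1) (n+1)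
        calc (∑ i ∈ range (n+1), (1 / Nat.factorial i : ℝ))
            = ∑ i ∈ range (n+1), ((1:ℝ)^i / Nat.factorial i) := by
              apply Finset.sum_congr rfl; intro i _; rw [one_pow]
          _ ≤ Real.exp 1 := h
      · positivity
    -- combine
    have hnR : (0:ℝ) < (n:ℝ) := by positivity
    have hnm : (0:ℝ) < ((n:ℝ) ^ m) := by positivity
    have hupR : ((n:ℝ))^m ≤ (∑ j ∈ range (n+1), (Nat.choose n j * Nat.factorial j : ℝ)) * (St m (n-1) : ℝ) := by
      have h' := (Nat.cast_le (α := ℝ)).2 hup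
      push_cast at h'
      exact h'
    rw [hNc]
    have hnm0 : ((n ^ m : ℕ) : ℝ) = (n:ℝ)^m := by push_cast; ring
    rw [hnm0, div_le_div_iff₀ hepos hnm]
    push_cast
    have hStnn : (0:ℝ) ≤ (St m (n-1) : ℝ) := by positivity
    have hmul := mul_le_mul_of_nonneg_right hsum hStnn
    nlinarith [hupR, hmul, hnm]
end

section
/- Let H ⊆ Y^X be a hypothesis class and n ∈ ℕ, and suppose for every S ∈ X^n the one-inclusion graph G(H|_S) admits a (possibly fractional) orientation with every vertex's in-degree at least n − k. Then there exists a (randomized) learner A whose transductive error on every instance (S, h) with |S| = n and h ∈ H is at most k/n. Conversely, any learner with transductive error at most k/n on all size-n instances induces on each G(H|_S) an orientation with all in-degrees at least n − k. -/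
open scoped NNReal

/-- The vertices of the one-inclusion graph `G(H|_S)`: restrictions of hypotheses to `S`. -/
def OIGVertex {X Y : Type*} (H : Set (X → Y)) {n : ℕ} (S : Fin n → X) :
    Set (Fin n → Y) :=
  {g | ∃ h ∈ H, ∀ i, h (S i) = g i}

/-- A fractional (randomized) orientation of the one-inclusion graph: `ω i y v` is the mass
the hyperedge "coordinate `i` deleted from labeling `y`" places on incident vertex `v`. It
depends only on `y` off coordinate `i`, is supported on incident vertices, and has total mass
one on every hyperedge (i.e., whenever an incident vertex exists). -/
def IsFracOrientation {X Y : Type*} (H : Set (X → Y)) {n : ℕ} (S : Fin n → X)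
    (ω : Fin n → (Fin n → Y) → (Fin n → Y) → ℝ≥0) : Prop :=
  (∀ (i : Fin n) (y y' : Fin n → Y), (∀ j, j ≠ i → y j = y' j) → ω i y = ω i y') ∧
  (∀ i y v, ω i y v ≠ 0 → v ∈ OIGVertex H S ∧ ∀ j, j ≠ i → v j = y j) ∧
  (∀ i y, (∃ v ∈ OIGVertex H S, ∀ j, j ≠ i → v j = y j) → ∑' v, ω i y v = 1)

/-- A randomized transductive learner on samples of size `n`: given the unlabeled points `S`,
a held-out index `i` and the labels of the other points, it outputs a probability
distribution over labels, depending only on the labels off coordinate `i`. -/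
def IsRandLearner {X Y : Type*} (n : ℕ)
    (A : (Fin n → X) → Fin n → (Fin n → Y) → Y → ℝ≥0) : Prop :=
  (∀ S i (y y' : Fin n → Y), (∀ j, j ≠ i → y j = y' j) → A S i y = A S i y') ∧
  (∀ S i y, ∑' b, A S i y b = 1)

/-- The transductive error of a randomized learner on the instance `(S, h)`: the average over
a uniformly random held-out index of the probability of mispredicting `h (S i)`. -/
noncomputable def transErr {X Y : Type*} {n : ℕ}
    (A : (Fin n → X) → Fin n → (Fin n → Y) → Y → ℝ≥0)
    (S : Fin n → X) (h : X → Y) : ℝ :=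
  (1 / n) * ∑ i : Fin n, (1 - (A S i (fun j => h (S j)) (h (S i)) : ℝ))

/- ### Auxiliary material -/

private lemma update_eq_update_of_eq_off {Y : Type*} {n : ℕ} (i : Fin n) (c : Y)
    {y y' : Fin n → Y} (h : ∀ j, j ≠ i → y j = y' j) :
    Function.update y i c = Function.update y' i c := by
  funext j
  rcases eq_or_ne j i with rfl | hj
  · simp
  · simp [Function.update_of_ne hj, h j hj]

-- The learner induced by a family of fractional orientations.
open Classical in
noncomputable def learnerOf {X Y : Type*} [Nonempty Y] (H : Set (X → Y)) {n : ℕ}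
    (ω : (Fin n → X) → Fin n → (Fin n → Y) → (Fin n → Y) → ℝ≥0) :
    (Fin n → X) → Fin n → (Fin n → Y) → Y → ℝ≥0 :=
  fun S i y b =>
    if (∃ v ∈ OIGVertex H S, ∀ j, j ≠ i →
        v j = Function.update y i (Classical.arbitrary Y) j) then
      ω S i (Function.update y i (Classical.arbitrary Y)) (Function.update y i b)
    else if b = Classical.arbitrary Y then 1 else 0

-- Auxiliary: the orientation on the hyperedge with representative `z`.
open Classical in
noncomputable def orientAux {X Y : Type*} {n : ℕ} (H : Set (X → Y))
    (A : (Fin n → X) → Fin n → (Fin n → Y) → Y → ℝ≥0) (S : Fin n → X)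
    (i : Fin n) (z : Fin n → Y) (v : Fin n → Y) : ℝ≥0 :=
  if hex : ∃ w ∈ OIGVertex H S, ∀ j, j ≠ i → w j = z j then
    (if v ∈ OIGVertex H S ∧ (∀ j, j ≠ i → v j = z j) then A S i z (v i) else 0) +
    (if v = hex.choose then
      1 - ∑' (w : {w // w ∈ OIGVertex H S ∧ ∀ j, j ≠ i → w j = z j}), A S i z (w.1 i)
     else 0)
  else 0

-- The fractional orientation induced by a learner.
noncomputable def orientOf {X Y : Type*} [Nonempty Y] {n : ℕ} (H : Set (X → Y))
    (A : (Fin n → X) → Fin n → (Fin n → Y) → Y → ℝ≥0) (S : Fin n → X) :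
    Fin n → (Fin n → Y) → (Fin n → Y) → ℝ≥0 :=
  fun i y v => orientAux H A S i (Function.update y i (Classical.arbitrary Y)) v

/-- If every one-inclusion graph `G(H|_S)` for `S ∈ X^n` admits a
fractional orientation with all in-degrees at least `n − k`, then there is a randomized
learner with transductive error at most `k/n` on all instances `(S, h)` with `h ∈ H`.
Conversely, any learner with transductive error at most `k/n` on all size-`n` instances
induces on each `G(H|_S)` a fractional orientation with all in-degrees at least `n − k`. -/
theorem stmt_14 {X Y : Type*} [Nonempty Y] (H : Set (X → Y)) (n k : ℕ) :
    ((∀ S : Fin n → X, ∃ ω, IsFracOrientation H S ω ∧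
        ∀ v ∈ OIGVertex H S, (n : ℝ) - k ≤ ∑ i : Fin n, (ω i v v : ℝ)) →
      ∃ A, IsRandLearner n A ∧
        ∀ (S : Fin n → X) (h : X → Y), h ∈ H → transErr A S h ≤ (k : ℝ) / n)
    ∧
    (∀ A, IsRandLearner n A →
      (∀ (S : Fin n → X) (h : X → Y), h ∈ H → transErr A S h ≤ (k : ℝ) / n) →
      ∀ S : Fin n → X, ∃ ω, IsFracOrientation H S ω ∧
        (∀ (i : Fin n) (v : Fin n → Y), v ∈ OIGVertex H S → A S i v (v i) ≤ ω i v v) ∧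
        ∀ v ∈ OIGVertex H S, (n : ℝ) - k ≤ ∑ i : Fin n, (ω i v v : ℝ)) := by
  classical
  constructor
  · -- direction 1 : orientations give a learner
    intro hyp
    choose ω hω hbd using hyp
    have hkey : ∀ (S : Fin n → X) (v : Fin n → Y), v ∈ OIGVertex H S → ∀ i,
        learnerOf H ω S i v (v i) = ω S i v v := by
      intro S v hv i
      have hex : ∃ w ∈ OIGVertex H S, ∀ j, j ≠ i →
          w j = Function.update v i (Classical.arbitrary Y) j :=
        ⟨v, hv, fun j hj => (Function.update_of_ne hj _ _).symm⟩
      simp only [learnerOf, if_pos hex, Function.update_eq_self]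
      rw [(hω S).1 i (Function.update v i (Classical.arbitrary Y)) v
        (fun j hj => Function.update_of_ne hj _ _)]
    refine ⟨learnerOf H ω, ⟨?_, ?_⟩, ?_⟩
    · -- invariance
      intro S i y y' hyy'
      funext b
      simp only [learnerOf, update_eq_update_of_eq_off i (Classical.arbitrary Y) hyy',
        update_eq_update_of_eq_off i b hyy']
    · -- normalization
      intro S i y
      by_cases hex : ∃ w ∈ OIGVertex H S, ∀ j, j ≠ i →
          w j = Function.update y i (Classical.arbitrary Y) j
      · simp only [learnerOf, if_pos hex]
        have hinj : Function.Injective (fun b => Function.update y i b) := by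
          intro b b' hbb'
          have := congrFun hbb' i
          simpa using this
        have hsupp : Function.support (ω S i (Function.update y i (Classical.arbitrary Y))) ⊆
            Set.range (fun b => Function.update y i b) := by
          intro v hvne
          obtain ⟨_, hvy⟩ := (hω S).2.1 i (Function.update y i (Classical.arbitrary Y)) v hvne
          refine ⟨v i, ?_⟩
          funext j
          rcases eq_or_ne j i with rfl | hj
          · simp
          · simp [Function.update_of_ne hj, hvy j hj]
        rw [hinj.tsum_eq hsupp]
        exact (hω S).2.2 i (Function.update y i (Classical.arbitrary Y)) hex
      · simp only [learnerOf, if_neg hex]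
        exact tsum_ite_eq (Classical.arbitrary Y) (fun _ => (1 : ℝ≥0))
    · -- error bound
      intro S h hH
      have hv : (fun j => h (S j)) ∈ OIGVertex H S := ⟨h, hH, fun i => rfl⟩
      rw [transErr]
      have hsum : ∑ i : Fin n, (1 - (learnerOf H ω S i (fun j => h (S j)) (h (S i)) : ℝ))
          = (n : ℝ) - ∑ i : Fin n,
              ((ω S i (fun j => h (S j)) (fun j => h (S j)) : ℝ≥0) : ℝ) := by
        rw [Finset.sum_sub_distrib]
        congr 1
        · simp
        · refine Finset.sum_congr rfl fun i _ => ?_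
          exact congrArg NNReal.toReal (hkey S _ hv i)
      rw [hsum]
      have hle : (n : ℝ) - ∑ i : Fin n,
          ((ω S i (fun j => h (S j)) (fun j => h (S j)) : ℝ≥0) : ℝ) ≤ (k : ℝ) := by
        have := hbd S _ hv
        linarith
      calc (1 / (n : ℝ)) * ((n : ℝ) - ∑ i : Fin n,
              ((ω S i (fun j => h (S j)) (fun j => h (S j)) : ℝ≥0) : ℝ))
          ≤ (1 / (n : ℝ)) * k := by
            apply mul_le_mul_of_nonneg_left hle
            positivity
        _ = (k : ℝ) / n := by rw [one_div, inv_mul_eq_div]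
  · -- direction 2 : a learner gives orientations
    intro A hA herr S
    have hAsummable : ∀ S' i y, Summable (A S' i y) := by
      intro S' i y
      by_contra hns
      have h0 := tsum_eq_zero_of_not_summable hns
      rw [hA.2 S' i y] at h0
      exact one_ne_zero h0
    have hinj : ∀ (i : Fin n) (z : Fin n → Y), Function.Injective
        (fun w : {w // w ∈ OIGVertex H S ∧ ∀ j, j ≠ i → w j = z j} => w.1 i) := by
      intro i z w w' hww'
      ext j
      rcases eq_or_ne j i with rfl | hj
      · exact hww'
      · rw [w.2.2 j hj, w'.2.2 j hj]
    have hT : ∀ (i : Fin n) (z : Fin n → Y),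
        (∑' (w : {w // w ∈ OIGVertex H S ∧ ∀ j, j ≠ i → w j = z j}), A S i z (w.1 i)) ≤ 1 := by
      intro i z
      have := NNReal.tsum_comp_le_tsum_of_inj (hAsummable S i z) (hinj i z)
      rwa [hA.2 S i z] at this
    have hge : ∀ (i : Fin n) (v : Fin n → Y), v ∈ OIGVertex H S →
        A S i v (v i) ≤ orientOf H A S i v v := by
      intro i v hv
      have hex : ∃ w ∈ OIGVertex H S, ∀ j, j ≠ i →
          w j = Function.update v i (Classical.arbitrary Y) j :=
        ⟨v, hv, fun j hj => (Function.update_of_ne hj _ _).symm⟩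
      have hmem : v ∈ OIGVertex H S ∧ ∀ j, j ≠ i →
          v j = Function.update v i (Classical.arbitrary Y) j :=
        ⟨hv, fun j hj => (Function.update_of_ne hj _ _).symm⟩
      have hAeq : A S i (Function.update v i (Classical.arbitrary Y)) = A S i v :=
        hA.1 S i _ v (fun j hj => Function.update_of_ne hj _ _)
      simp only [orientOf, orientAux, dif_pos hex, if_pos hmem, hAeq]
      exact le_self_add
    refine ⟨orientOf H A S, ⟨?_, ?_, ?_⟩, fun i v hv => hge i v hv, ?_⟩
    · -- invariance
      intro i y y' hyy'
      funext v
      simp only [orientOf, update_eq_update_of_eq_off i (Classical.arbitrary Y) hyy']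
    · -- support
      intro i y v hvne
      by_cases hex : ∃ w ∈ OIGVertex H S, ∀ j, j ≠ i →
          w j = Function.update y i (Classical.arbitrary Y) j
      · simp only [orientOf, orientAux, dif_pos hex] at hvne
        have hup : ∀ j, j ≠ i → Function.update y i (Classical.arbitrary Y) j = y j :=
          fun j hj => Function.update_of_ne hj _ _
        by_cases hmem : v ∈ OIGVertex H S ∧ ∀ j, j ≠ i →
            v j = Function.update y i (Classical.arbitrary Y) j
        · exact ⟨hmem.1, fun j hj => (hmem.2 j hj).trans (hup j hj)⟩
        · rw [if_neg hmem, zero_add] at hvne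
          have hvch : v = hex.choose := by
            by_contra hne
            rw [if_neg hne] at hvne
            exact hvne rfl
          obtain ⟨hch1, hch2⟩ := hex.choose_spec
          subst hvch
          exact ⟨hch1, fun j hj => (hch2 j hj).trans (hup j hj)⟩
      · simp only [orientOf, orientAux, dif_neg hex] at hvne
        exact absurd rfl hvne
    · -- normalization
      intro i y hy
      obtain ⟨w0, hw0, hw0y⟩ := hy
      have hex : ∃ w ∈ OIGVertex H S, ∀ j, j ≠ i →
          w j = Function.update y i (Classical.arbitrary Y) j := by
        refine ⟨w0, hw0, fun j hj => ?_⟩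
        rw [hw0y j hj, Function.update_of_ne hj]
      set z : Fin n → Y := Function.update y i (Classical.arbitrary Y) with hz
      set s : Set (Fin n → Y) := {w | w ∈ OIGVertex H S ∧ ∀ j, j ≠ i → w j = z j} with hs
      set F : (Fin n → Y) → ℝ≥0 := fun w => A S i z (w i) with hF
      set T : ℝ≥0 := ∑' (w : {w // w ∈ OIGVertex H S ∧ ∀ j, j ≠ i → w j = z j}), A S i z (w.1 i)
        with hTdef
      have hsummf : Summable (s.indicator F) := by
        rw [← summable_subtype_iff_indicator]
        exact NNReal.summable_comp_injective (hAsummable S i z) (hinj i z)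
      have hsummg : Summable (fun v : Fin n → Y => if v = hex.choose then 1 - T else 0) := by
        apply summable_of_ne_finset_zero (s := {hex.choose})
        intro v hv
        rw [if_neg (by simpa using hv)]
      have hbody : ∀ v, orientOf H A S i y v =
          s.indicator F v + (if v = hex.choose then 1 - T else 0) := by
        intro v
        simp only [orientOf, orientAux, ← hz, dif_pos hex]
        congr 1
        rw [Set.indicator_apply]
        rfl
      calc ∑' v, orientOf H A S i y v
          = ∑' v, (s.indicator F v + (if v = hex.choose then 1 - T else 0)) :=
            tsum_congr hbody
        _ = (∑' v, s.indicator F v) + ∑' v, (if v = hex.choose then 1 - T else 0) :=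
            Summable.tsum_add hsummf hsummg
        _ = T + (1 - T) := by
            rw [← tsum_subtype s F, tsum_ite_eq hex.choose (fun _ => 1 - T)]
            rfl
        _ = 1 := by
            rw [add_comm]
            exact tsub_add_cancel_of_le (hT i z)
    · -- in-degree bound
      intro v hv
      obtain ⟨h, hH, hhv⟩ := hv
      have hveq : (fun j => h (S j)) = v := funext hhv
      have herrv := herr S h hH
      rw [transErr, hveq] at herrv
      have hv' : v ∈ OIGVertex H S := ⟨h, hH, hhv⟩
      have hsum_le : ∑ i : Fin n, ((A S i v (v i) : ℝ≥0) : ℝ) ≤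
          ∑ i : Fin n, ((orientOf H A S i v v : ℝ≥0) : ℝ) :=
        Finset.sum_le_sum fun i _ => by exact_mod_cast hge i v hv'
      have hAi : ∀ i : Fin n, ((A S i v (h (S i)) : ℝ≥0) : ℝ)
          = ((A S i v (v i) : ℝ≥0) : ℝ) := by
        intro i; rw [hhv i]
      rcases Nat.eq_zero_or_pos n with rfl | hn
      · simp
      · have hnR : (0 : ℝ) < n := by exact_mod_cast hn
        have hsum : ∑ i : Fin n, (1 - ((A S i v (h (S i)) : ℝ≥0) : ℝ))
            = (n : ℝ) - ∑ i : Fin n, ((A S i v (v i) : ℝ≥0) : ℝ) := by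
          rw [Finset.sum_sub_distrib]
          congr 1
          · simp
          · exact Finset.sum_congr rfl fun i _ => hAi i
        rw [hsum, one_div, inv_mul_eq_div, div_le_div_iff₀ hnR hnR] at herrv
        have hfin := le_of_mul_le_mul_right herrv hnR
        linarith
end

section
/- Let G = (V, E) be a possibly infinite hypergraph in which every vertex has degree exactly n, and let c : V → ℕ satisfy c(v) ≤ n for all v. If for every finite U ⊆ V the number of edges incident to at least one vertex of U is at least Σ_{v∈U} c(v), then G admits an orientation f : E → V (each edge assigned to an incident vertex) in which every vertex v has in-degree at least c(v). -/
/-- Infinite non-uniform Hall theorem for `n`-regular hypergraphs: if every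
vertex is incident to exactly `n` edges, `c : V → ℕ` satisfies `c v ≤ n`, and every finite
`U ⊆ V` is incident to at least `Σ_{v∈U} c(v)` edges, then there is an orientation
`f : E → V` (each edge assigned to an incident vertex) with every vertex `v` of in-degree at
least `c v`. -/
theorem stmt_19 {V E : Type*} (inc : E → V → Prop) (n : ℕ)
    (hfin : ∀ v : V, {e : E | inc e v}.Finite)
    (hreg : ∀ v : V, {e : E | inc e v}.ncard = n)
    (hE : ∀ e : E, ∃ v, inc e v)
    (c : V → ℕ) (hc : ∀ v, c v ≤ n)
    (hall : ∀ U : Finset V, (∑ v ∈ U, c v) ≤ {e : E | ∃ v ∈ U, inc e v}.ncard) :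
    ∃ f : E → V, (∀ e, inc e (f e)) ∧ ∀ v, c v ≤ {e : E | f e = v}.ncard := by
  classical
  -- index type of demand copies
  set A := Σ v : V, Fin (c v) with hA
  set t : A → Finset E := fun a => (hfin a.1).toFinset with ht
  have hHall : ∀ s : Finset A, s.card ≤ (s.biUnion t).card := by
    intro s
    set U : Finset V := s.image Sigma.fst with hU
    have h1 : s ⊆ U.sigma (fun v => (Finset.univ : Finset (Fin (c v)))) := by
      intro a ha
      rw [Finset.mem_sigma, hU]
      exact ⟨Finset.mem_image_of_mem Sigma.fst ha, Finset.mem_univ _⟩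
    have h2 : s.card ≤ ∑ v ∈ U, c v := by
      calc s.card ≤ (U.sigma (fun v => (Finset.univ : Finset (Fin (c v))))).card :=
            Finset.card_le_card h1
        _ = ∑ v ∈ U, c v := by simp [Finset.card_sigma]
    have h3 : (s.biUnion t : Set E) = {e : E | ∃ v ∈ U, inc e v} := by
      ext e
      simp only [Finset.coe_biUnion, Set.mem_iUnion, Finset.mem_coe, ht,
        Set.Finite.mem_toFinset, Set.mem_setOf_eq, hU, Finset.mem_image]
      constructor
      · rintro ⟨a, ha, hae⟩
        exact ⟨a.1, ⟨a, ha, rfl⟩, hae⟩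
      · rintro ⟨v, ⟨a, ha, rfl⟩, hev⟩
        exact ⟨a, ha, hev⟩
    have h4 : {e : E | ∃ v ∈ U, inc e v}.ncard = (s.biUnion t).card := by
      rw [← h3, Set.ncard_coe_finset]
    calc s.card ≤ ∑ v ∈ U, c v := h2
      _ ≤ {e : E | ∃ v ∈ U, inc e v}.ncard := hall U
      _ = (s.biUnion t).card := h4
  obtain ⟨g, hginj, hg⟩ := (Finset.all_card_le_biUnion_card_iff_exists_injective t).mp hHall
  set f : E → V := fun e =>
    if h : ∃ a : A, g a = e then (Classical.choose h).1 else Classical.choose (hE e) with hf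
  have hfg : ∀ a : A, f (g a) = a.1 := by
    intro a
    have h : ∃ b : A, g b = g a := ⟨a, rfl⟩
    have : Classical.choose h = a := hginj (Classical.choose_spec h)
    simp only [hf, dif_pos h, this]
  refine ⟨f, ?_, ?_⟩
  · intro e
    by_cases h : ∃ a : A, g a = e
    · have hs := Classical.choose_spec h
      have := hg (Classical.choose h)
      rw [ht] at this
      simp only [Set.Finite.mem_toFinset, Set.mem_setOf_eq] at this
      rw [hf]
      simp only [dif_pos h]
      rwa [hs] at this
    · rw [hf]
      simp only [dif_neg h]
      exact Classical.choose_spec (hE e)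
  · intro v
    set F : Finset E := (Finset.univ : Finset (Fin (c v))).image (fun i => g ⟨v, i⟩) with hF
    have hFcard : F.card = c v := by
      rw [hF, Finset.card_image_of_injective]
      · simp
      · intro i j hij
        have h2 := hginj hij
        obtain ⟨-, h3⟩ := Sigma.mk.inj_iff.mp h2
        exact eq_of_heq h3
    have hsub : (F : Set E) ⊆ {e : E | f e = v} := by
      intro e he
      simp only [hF, Finset.coe_image, Set.mem_image, Finset.mem_coe] at he
      obtain ⟨i, _, rfl⟩ := he
      exact hfg ⟨v, i⟩
    have hsub2 : {e : E | f e = v} ⊆ {e : E | inc e v} := by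
      intro e he
      have hi : inc e (f e) := by
        by_cases h : ∃ a : A, g a = e
        · have hs := Classical.choose_spec h
          have := hg (Classical.choose h)
          rw [ht] at this
          simp only [Set.Finite.mem_toFinset, Set.mem_setOf_eq] at this
          rw [hf]; simp only [dif_pos h]; rwa [hs] at this
        · rw [hf]; simp only [dif_neg h]; exact Classical.choose_spec (hE e)
      rwa [he] at hi
    have hfin' : {e : E | f e = v}.Finite := (hfin v).subset hsub2
    calc c v = F.card := hFcard.symm
      _ = (F : Set E).ncard := (Set.ncard_coe_finset F).symm
      _ ≤ {e : E | f e = v}.ncard := Set.ncard_le_ncard hsub hfin'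
end
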